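/- arXiv:1806.07162 — 8 statements merged into one kernel-verified Lean document; each statement's English description precedes it below -/
import Mathlib

section
/- Let n ≥ 2 and let λ_1, …, λ_n be complex numbers. For 0 ≤ k ≤ n let J_k = e_k(λ_1,…,λ_n) be the k-th elementary symmetric polynomial in λ_1,…,λ_n, with J_0 = 1 and J_k = 0 for k < 0 or k > n. Then the product over all pairs 1 ≤ i < j ≤ n of (λ_i + λ_j) equals the determinant of the (n−1)×(n−1) matrix whose (i,j) entry (rows and columns indexed 1,…,n−1) is J_{2i−j}. -/
/-!
Write `p = ∏ᵢ (X + λᵢ) = ∑ₖ e_k X^(n-k)`; the right-hand side is the Hurwitz determinant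
`Δ_{n-1}(p)`, and we induct on the number of roots. Adjoining a root `μ` replaces `p` by
`(X + μ) p`, with coefficients `e_k + μ e_{k-1}`, so the new Hurwitz matrix is `H * L` where `H`
is a rectangular Hurwitz matrix of `p` and `L` is the matrix of multiplication by `X + μ`.
Bordering `H` by the row `(1, 0, …, 0)` and `L` by the kernel vector `((-1)^c e_c)_c` of `H` gives
two square matrices with determinants `Δ_{n-1}(p)` and `p(μ) = ∏ᵢ (λᵢ + μ)`, whose product is
block triangular with the new Hurwitz matrix as its block. So `Δ_n((X + μ) p) = p(μ) Δ_{n-1}(p)`,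
and `p(μ)` is exactly the factor that the new root contributes to the left-hand side.
-/

/-- The `k`-th elementary symmetric polynomial of `lam : Fin n → ℂ`, extended to
integer indices `k` by `0` outside `0 ≤ k ≤ n` (with `e_0 = 1`). -/
noncomputable def esymZ (n : ℕ) (lam : Fin n → ℂ) (k : ℤ) : ℂ :=
  if 0 ≤ k ∧ k ≤ (n : ℤ) then
    ∑ s ∈ Finset.powersetCard k.toNat (Finset.univ : Finset (Fin n)), ∏ i ∈ s, lam i
  else 0

open Finset Matrix

theorem Multiset.esymm_cons_succ {R : Type*} [CommSemiring R] (a : R) (s : Multiset R) (k : ℕ) :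
    (a ::ₘ s).esymm (k + 1) = s.esymm (k + 1) + a * s.esymm k := by
  simp [Multiset.esymm, Multiset.map_map, Multiset.prod_cons, Multiset.sum_map_mul_left]

theorem Fin.prod_prod_Iio_castSucc {M : Type*} [CommMonoid M] {n : ℕ}
    (f : Fin (n + 1) → Fin (n + 1) → M) :
    ∏ j, ∏ i ∈ Iio j, f i j =
      (∏ j : Fin n, ∏ i ∈ Iio j, f i.castSucc j.castSucc) * ∏ i : Fin n, f i.castSucc (last n) := by
  simp_rw [Fin.prod_univ_castSucc, Fin.Iio_castSucc, Fin.Iio_last_eq_map, prod_map]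
  rfl

section CommRing

variable {R : Type*} [CommRing R]

theorem Matrix.det_eq_mul_det_submatrix_succ_of_row_zero {m : ℕ}
    (A : Matrix (Fin (m + 1)) (Fin (m + 1)) R) (h : ∀ j : Fin m, A 0 j.succ = 0) :
    A.det = A 0 0 * (A.submatrix Fin.succ Fin.succ).det := by
  simp [det_succ_row_zero A, Fin.sum_univ_succ, h]

theorem Matrix.det_eq_mul_det_submatrix_succ_of_column_zero {m : ℕ}
    (A : Matrix (Fin (m + 1)) (Fin (m + 1)) R) (h : ∀ i : Fin m, A i.succ 0 = 0) :
    A.det = A 0 0 * (A.submatrix Fin.succ Fin.succ).det := by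
  rw [← det_transpose, Aᵀ.det_eq_mul_det_submatrix_succ_of_row_zero h, ← det_transpose]
  rfl

theorem Matrix.det_eq_mul_det_submatrix_of_row_last {m : ℕ}
    (A : Matrix (Fin (m + 1)) (Fin (m + 1)) R) (h : ∀ j : Fin m, A (Fin.last m) j.succ = 0) :
    A.det = (-1) ^ m * A (Fin.last m) 0 * (A.submatrix Fin.castSucc Fin.succ).det := by
  simp [det_succ_row A (Fin.last m), Fin.sum_univ_succ, h]

/-- The odd coefficients of `f(x) f(-x)` vanish. -/
theorem sum_range_neg_one_pow_mul_mul_sub_eq_zero (f : ℕ → R) {N : ℕ} (hN : Odd N) :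
    ∑ c ∈ range (N + 1), (-1) ^ c * f c * f (N - c) = 0 := by
  refine sum_involution (fun c _ => N - c) (fun c hc => ?_) (fun c hc _ => ?_)
    (fun c _ => mem_range.2 (Nat.sub_lt_succ N c)) (fun c hc => ?_)
  · have hc : c ≤ N := Nat.lt_succ_iff.1 (mem_range.1 hc)
    have hprod : (-1 : R) ^ (N - c) * (-1) ^ c = -1 := by
      rw [← pow_add, Nat.sub_add_cancel hc, hN.neg_one_pow]
    have hsq : ((-1 : R) ^ c) ^ 2 = 1 := by
      rw [← pow_mul, mul_comm, (even_two_mul c).neg_one_pow]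
    have hsign : (-1 : R) ^ (N - c) = -(-1) ^ c := by
      linear_combination (-(-1 : R) ^ (N - c)) * hsq + (-1 : R) ^ c * hprod
    rw [Nat.sub_sub_self hc, hsign]
    ring
  · have : c ≤ N := Nat.lt_succ_iff.1 (mem_range.1 hc)
    obtain ⟨k, rfl⟩ := hN
    omega
  · exact Nat.sub_sub_self (Nat.lt_succ_iff.1 (mem_range.1 hc))

/-- Rows and columns start at `0`, and `a k` is the coefficient of `x ^ (d - k)` in a polynomial of
degree `d`. -/
def hurwitzMatrix (a : ℤ → R) (m k : ℕ) : Matrix (Fin m) (Fin k) R :=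
  of fun i j => a (2 * (i : ℕ) + 1 - (j : ℕ))

/-- Multiplication by `X + μ`, from coefficient vectors of length `m` to those of length `m + 1`. -/
def linearFactorMatrix (μ : R) (m : ℕ) : Matrix (Fin (m + 1)) (Fin m) R :=
  of fun c j => (if c = j.castSucc then 1 else 0) + if c = j.succ then μ else 0

theorem hurwitzMatrix_mul_linearFactorMatrix (a : ℤ → R) (μ : R) (m k : ℕ) :
    hurwitzMatrix a m (k + 1) * linearFactorMatrix μ k =
      hurwitzMatrix (fun l => a l + μ * a (l - 1)) m k := by
  ext i j
  simp only [hurwitzMatrix, linearFactorMatrix, mul_apply, of_apply, mul_add, mul_ite, mul_one,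
    mul_zero, sum_add_distrib, sum_ite_eq', mem_univ, if_true, Fin.val_castSucc, Fin.val_succ]
  push_cast
  ring_nf

theorem det_linearFactorMatrix_submatrix_castSucc (μ : R) (m : ℕ) :
    ((linearFactorMatrix μ m).submatrix Fin.castSucc id).det = 1 := by
  rw [det_of_isLowerTriangular]
  · simp [linearFactorMatrix, Fin.ext_iff]
  · intro i j (hij : (i : ℕ) < j)
    simp only [linearFactorMatrix, submatrix_apply, of_apply, id_eq, Fin.ext_iff, Fin.val_castSucc,
      Fin.val_succ]
    rw [if_neg (by omega), if_neg (by omega), add_zero]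

theorem hurwitzMatrix_mulVec_alternating (a : ℤ → R) (m n : ℕ) (h0 : ∀ k < 0, a k = 0)
    (hn : ∀ k, (n : ℤ) < k → a k = 0) :
    hurwitzMatrix a m (n + 1) *ᵥ (fun c : Fin (n + 1) => (-1) ^ (c : ℕ) * a c) = 0 := by
  funext i
  set N := 2 * (i : ℕ) + 1
  set G : ℕ → R := fun c => (-1) ^ c * a c * a (N - c)
  have hG : ∀ c, n < c ∨ N < c → G c = 0 := by
    rintro c (hc | hc)
    · simp [G, hn c (by omega)]
    · simp [G, h0 (N - c) (by omega)]
  calc (hurwitzMatrix a m (n + 1) *ᵥ fun c : Fin (n + 1) => (-1) ^ (c : ℕ) * a c) i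
      = ∑ c ∈ range (n + 1), G c := by
        rw [mulVec, dotProduct, ← Fin.sum_univ_eq_sum_range G]
        refine sum_congr rfl fun c _ => ?_
        simp only [G, N, hurwitzMatrix, of_apply]
        push_cast
        ring
    _ = ∑ c ∈ range (n + N + 2), G c := by
        refine sum_subset (range_subset_range.2 (by omega)) fun c _ hc => hG c ?_
        rw [mem_range] at hc
        omega
    _ = ∑ c ∈ range (N + 1), G c := by
        refine (sum_subset (range_subset_range.2 (by omega)) fun c _ hc => hG c ?_).symm
        rw [mem_range] at hc
        omega
    _ = ∑ c ∈ range (N + 1), (-1) ^ c * a c * a ↑(N - c) :=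
        sum_congr rfl fun c hc => by simp [G, Nat.cast_sub (Nat.lt_succ_iff.1 (mem_range.1 hc))]
    _ = 0 := sum_range_neg_one_pow_mul_mul_sub_eq_zero (fun k => a k) (by simp [N])

theorem det_vecCons_alternating_linearFactorMatrix (a : ℤ → R) (μ : R) (n : ℕ) :
    (of fun c : Fin (n + 2) =>
        vecCons ((-1) ^ (c : ℕ) * a c) fun j => linearFactorMatrix μ (n + 1) c j).det =
      ∑ k ∈ range (n + 2), a k * μ ^ (n + 1 - k) := by
  set P := of fun c : Fin (n + 2) =>
    vecCons ((-1) ^ (c : ℕ) * a c) fun j => linearFactorMatrix μ (n + 1) c j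
  -- The last row becomes evaluation at `-μ`, which kills the columns of `linearFactorMatrix`.
  set w : Fin (n + 2) → R := fun k => (-μ) ^ (n + 1 - k)
  set Q := P.updateRow (Fin.last (n + 1)) (∑ k, w k • P k)
  have hPQ : P.det = Q.det := by
    simp [Q, det_updateRow_sum, w]
  have hQ_last : ∀ j : Fin (n + 1), Q (Fin.last (n + 1)) j.succ = 0 := by
    intro j
    simp only [Q, P, w, linearFactorMatrix, updateRow_self, Finset.sum_apply, Pi.smul_apply,
      of_apply, cons_val_succ, smul_eq_mul, mul_add, mul_ite, mul_one, mul_zero, sum_add_distrib, sum_ite_eq',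
      mem_univ, if_true, Fin.val_castSucc, Fin.val_succ, Nat.add_sub_add_right]
    rw [Nat.sub_add_comm (Nat.lt_succ_iff.1 j.isLt), pow_succ]
    ring
  have hQ_minor : (Q.submatrix Fin.castSucc Fin.succ).det = 1 := by
    rw [← det_linearFactorMatrix_submatrix_castSucc μ (n + 1)]
    congr 1
    ext i j
    simp [Q, P]
  rw [hPQ, Q.det_eq_mul_det_submatrix_of_row_last hQ_last, hQ_minor, mul_one]
  simp only [Q, P, w, updateRow_self, Finset.sum_apply, Pi.smul_apply, of_apply, cons_val_zero,
    smul_eq_mul, mul_sum]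
  rw [Fin.sum_univ_eq_sum_range (fun k => (-1) ^ (n + 1) * ((-μ) ^ (n + 1 - k) * ((-1) ^ k * a k)))]
  refine sum_congr rfl fun k hk => ?_
  obtain ⟨d, hd⟩ : ∃ d, n + 1 = d + k := ⟨n + 1 - k, by have := mem_range.1 hk; omega⟩
  rw [hd, Nat.add_sub_cancel, pow_add, neg_pow]
  have hsq (e : ℕ) : ((-1 : R) ^ e) ^ 2 = 1 := by
    rw [← pow_mul, mul_comm, pow_mul, neg_one_sq, one_pow]
  linear_combination (a k * μ ^ d * ((-1) ^ k) ^ 2) * hsq d + (a k * μ ^ d) * hsq k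

theorem det_hurwitzMatrix_submatrix_succ (a : ℤ → R) (m : ℕ) (h0 : ∀ k < 0, a k = 0) :
    ((hurwitzMatrix a (m + 1) (m + 2)).submatrix id Fin.succ).det =
      a 0 * (hurwitzMatrix a m m).det := by
  have hminor : ((hurwitzMatrix a (m + 1) (m + 2)).submatrix id Fin.succ).submatrix Fin.succ
      Fin.succ = hurwitzMatrix a m m := by
    ext i j
    simp only [hurwitzMatrix, submatrix_apply, of_apply, id, Fin.val_succ]
    congr 1
    push_cast
    ring
  have hrow : ∀ j : Fin m, (hurwitzMatrix a (m + 1) (m + 2)).submatrix id Fin.succ 0 j.succ = 0 :=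
    fun j => h0 _ (by simp only [id_eq, Fin.val_zero, Fin.val_succ]; push_cast; omega)
  rw [det_eq_mul_det_submatrix_succ_of_row_zero _ hrow, hminor]
  simp [hurwitzMatrix]

theorem det_hurwitzMatrix_linearFactor (a : ℤ → R) (μ : R) (n : ℕ) (h0 : ∀ k < 0, a k = 0)
    (hn : ∀ k, (n : ℤ) + 1 < k → a k = 0) (ha0 : a 0 = 1) :
    (hurwitzMatrix (fun l => a l + μ * a (l - 1)) (n + 1) (n + 1)).det =
      (∑ k ∈ range (n + 2), a k * μ ^ (n + 1 - k)) * (hurwitzMatrix a n n).det := by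
  set H := hurwitzMatrix a (n + 1) (n + 2)
  set v : Fin (n + 2) → R := fun c => (-1) ^ (c : ℕ) * a c
  set M : Matrix (Fin (n + 2)) (Fin (n + 2)) R := of (vecCons (Pi.single 0 1) fun i j => H i j)
  set P : Matrix (Fin (n + 2)) (Fin (n + 2)) R :=
    of fun c => vecCons (v c) fun j => linearFactorMatrix μ (n + 1) c j
  have hHv : H *ᵥ v = 0 :=
    hurwitzMatrix_mulVec_alternating a _ _ h0 fun k hk => hn k (by push_cast at hk; exact hk)
  have hM : M.det = (hurwitzMatrix a n n).det := by
    rw [M.det_eq_mul_det_submatrix_succ_of_row_zero fun j => by simp [M]]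
    have hminor : M.submatrix Fin.succ Fin.succ = H.submatrix id Fin.succ := by ext; simp [M]
    simpa [M, hminor, ha0] using det_hurwitzMatrix_submatrix_succ a n h0
  have hMP : (M * P).det = (hurwitzMatrix (fun l => a l + μ * a (l - 1)) (n + 1) (n + 1)).det := by
    have hcorner : (M * P) 0 0 = 1 := by simp [M, P, mul_apply, v, Pi.single_apply, ha0]
    have hminor : (M * P).submatrix Fin.succ Fin.succ = H * linearFactorMatrix μ (n + 1) := by
      ext i j
      simp [M, P, mul_apply]
    rw [(M * P).det_eq_mul_det_submatrix_succ_of_column_zero fun i => ?_, hcorner, hminor,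
      hurwitzMatrix_mul_linearFactorMatrix, one_mul]
    simpa [M, P, mul_apply, mulVec, dotProduct] using congrFun hHv i
  rw [← hMP, det_mul, hM, det_vecCons_alternating_linearFactorMatrix, mul_comm]

end CommRing

section esymZ

variable {n : ℕ} (lam : Fin n → ℂ)

theorem esymZ_natCast (k : ℕ) : esymZ n lam k = (univ.val.map lam).esymm k := by
  rw [Finset.esymm_map_val, esymZ]
  split_ifs with h
  · simp
  · rw [powersetCard_eq_empty.2 (by simp only [card_univ, Fintype.card_fin]; omega), sum_empty]

theorem esymZ_of_neg {k : ℤ} (hk : k < 0) : esymZ n lam k = 0 := by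
  simp [esymZ, not_le.2 hk]

theorem esymZ_of_lt {k : ℤ} (hk : n < k) : esymZ n lam k = 0 := by
  simp [esymZ, not_le.2 hk]

theorem esymZ_zero : esymZ n lam 0 = 1 := by
  simp [esymZ]

theorem esymZ_succ (lam : Fin (n + 1) → ℂ) (k : ℤ) :
    esymZ (n + 1) lam k =
      esymZ n (lam ∘ Fin.castSucc) k + lam (Fin.last n) * esymZ n (lam ∘ Fin.castSucc) (k - 1) := by
  rcases lt_trichotomy k 0 with hk | rfl | hk
  · simp [esymZ_of_neg _ hk, esymZ_of_neg _ (show k - 1 < 0 by omega)]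
  · simp [esymZ_zero, esymZ_of_neg]
  · obtain ⟨k, rfl⟩ : ∃ m : ℕ, k = m + 1 := ⟨(k - 1).toNat, by omega⟩
    have hsplit : univ.val.map lam = lam (Fin.last n) ::ₘ univ.val.map (lam ∘ Fin.castSucc) := by
      rw [Fin.univ_castSuccEmb, Finset.cons_val, Multiset.map_cons, map_val, Multiset.map_map]
      rfl
    rw [add_sub_cancel_right, ← Nat.cast_succ, esymZ_natCast, esymZ_natCast, esymZ_natCast, hsplit,
      Multiset.esymm_cons_succ]

theorem sum_esymZ_mul_pow (μ : ℂ) :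
    ∑ k ∈ range (n + 1), esymZ n lam k * μ ^ (n - k) = ∏ i, (lam i + μ) := by
  have := congrArg (Polynomial.eval μ) (univ.val.map lam).prod_X_add_C_eq_sum_esymm
  rw [Multiset.map_map, Polynomial.eval_multiset_prod, Multiset.map_map,
    ← Finset.prod_eq_multiset_prod, Polynomial.eval_finsetSum, Multiset.card_map, card_val,
    card_univ, Fintype.card_fin] at this
  simp_rw [esymZ_natCast, add_comm (lam _)]
  simpa using this.symm

end esymZ

theorem prod_add_eq_det_hurwitzMatrix_esymZ (n : ℕ) (lam : Fin (n + 1) → ℂ) :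
    ∏ j, ∏ i ∈ Iio j, (lam i + lam j) = (hurwitzMatrix (esymZ (n + 1) lam) n n).det := by
  induction n with
  | zero =>
    rw [det_isEmpty]
    refine prod_eq_one fun j _ => prod_eq_one fun i hi => ?_
    exact ((mem_Iio.1 hi).ne (Subsingleton.elim (α := Fin 1) i j)).elim
  | succ n ih =>
    set a := esymZ (n + 1) (lam ∘ Fin.castSucc)
    have hrec : esymZ (n + 2) lam = fun l => a l + lam (Fin.last (n + 1)) * a (l - 1) :=
      funext (esymZ_succ lam)
    rw [Fin.prod_prod_Iio_castSucc, ih, ← sum_esymZ_mul_pow, hrec,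
      det_hurwitzMatrix_linearFactor a _ _ (fun k => esymZ_of_neg _)
        (fun k hk => esymZ_of_lt _ (by push_cast; exact hk)) (esymZ_zero _), mul_comm]
    rfl

theorem det_secondAdditiveCompound_eq_det_esymm_matrix_general
    (n : ℕ) (lam : Fin n → ℂ) :
    (∏ j : Fin n, ∏ i ∈ Finset.Iio j, (lam i + lam j)) =
      Matrix.det (Matrix.of fun i j : Fin (n - 1) =>
        esymZ n lam (2 * ((i : ℕ) : ℤ) + 2 - (((j : ℕ) : ℤ) + 1))) := by
  cases n with
  | zero => simp
  | succ n =>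
    rw [prod_add_eq_det_hurwitzMatrix_esymZ]
    congr
    ext i j
    simp only [hurwitzMatrix, of_apply]
    ring_nf

theorem det_secondAdditiveCompound_eq_det_esymm_matrix
    (n : ℕ) (hn : 2 ≤ n) (lam : Fin n → ℂ) :
    (∏ j : Fin n, ∏ i ∈ Finset.Iio j, (lam i + lam j)) =
      Matrix.det (Matrix.of fun i j : Fin (n - 1) =>
        esymZ n lam (2 * ((i : ℕ) : ℤ) + 2 - (((j : ℕ) : ℤ) + 1))) :=
  det_secondAdditiveCompound_eq_det_esymm_matrix_general n lam
end

section
/- Let n ≥ 2 and let M be an n×n complex matrix with eigenvalues λ_1, …, λ_n listed with algebraic multiplicity (i.e. the characteristic polynomial of M is ∏_{i=1}^n (X − λ_i)). For 1 ≤ k ≤ n let J_k denote the sum of the k×k principal minors of M, i.e. (−1)^k times the coefficient of X^{n−k} in det(XI − M); set J_0 = 1 and J_k = 0 for k < 0 or k > n. Then ∏_{1 ≤ i < j ≤ n}(λ_i + λ_j), the determinant of the second additive compound of M, equals the determinant of the (n−1)×(n−1) matrix whose (i,j) entry (1-indexed) is J_{2i−j}. -/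
/-!
Write `E_x = ∏ₗ (1 + xₗ X)`, whose coefficients are the elementary symmetric functions `e_k(x)`,
and `Z(y)` for the matrix whose `k`-th column lists the elementary symmetric functions of the
`yₗ` with `l ≠ k`. Since `(1 + xₗ X)(1 - xₗ X) = 1 - xₗ² X²`, the `n × n` matrix
`H = (e_{2i-j}(x))` satisfies `H · Z(-x) = Z(-x²)`. Dividing `E_y` by `1 + y_k X` factors `Z(y)`
as a unitriangular Toeplitz matrix times a Vandermonde matrix in `-y`, so
`det Z(y) = ∏_{i<j} (y_i - y_j)`. Hence `det H · V(x) = V(x²)` with `V` the Vandermonde product,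
and `det H = ∏_{i<j} (x_i + x_j)` for independent variables, hence for all `x`. The first row of
`H` is `(1, 0, …, 0)`, and deleting it with the first column leaves the matrix of the theorem
once the minor-sums `J_k` are identified with the `e_k` of the eigenvalues.
-/

/-- The `k`-th minor-sum of an `n × n` complex matrix `M`: the sum of its `k × k`
principal minors, i.e. `(-1)^k` times the coefficient of `X^(n-k)` in the
characteristic polynomial `det (X•I - M)`; extended to integer indices by `0`
outside `0 ≤ k ≤ n` (with `J 0 = 1` since the characteristic polynomial is monic). -/
noncomputable def minorSumC (n : ℕ) (M : Matrix (Fin n) (Fin n) ℂ) (k : ℤ) : ℂ :=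
  if 0 ≤ k ∧ k ≤ (n : ℤ) then (-1) ^ k.toNat * (Matrix.charpoly M).coeff (n - k.toNat)
  else 0

open Polynomial Finset Matrix

noncomputable section

variable {R S : Type*} [CommRing R] [CommRing S]

def intCoeff (p : R[X]) (m : ℤ) : R :=
  if 0 ≤ m then p.coeff m.toNat else 0

lemma intCoeff_natCast (p : R[X]) (m : ℕ) : intCoeff p m = p.coeff m := by
  simp [intCoeff]

lemma intCoeff_of_neg (p : R[X]) {m : ℤ} (hm : m < 0) : intCoeff p m = 0 :=
  if_neg hm.not_ge

lemma intCoeff_sub_natCast (p : R[X]) (a b : ℕ) :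
    intCoeff p (a - b) = if b ≤ a then p.coeff (a - b) else 0 := by
  split_ifs with h
  · rw [← Nat.cast_sub h, intCoeff_natCast]
  · exact intCoeff_of_neg p (by omega)

lemma intCoeff_map (f : R →+* S) (p : R[X]) (m : ℤ) :
    intCoeff (p.map f) m = f (intCoeff p m) := by
  unfold intCoeff
  split_ifs <;> simp

lemma coeff_mul_eq_sum_intCoeff (p q : R[X]) {n : ℕ} (hq : q.degree < n) (m : ℕ) :
    (p * q).coeff m = ∑ j : Fin n, intCoeff p (m - j) * q.coeff j := by
  set F : ℕ → R := fun j => intCoeff p (m - j) * q.coeff j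
  calc (p * q).coeff m = ∑ j ∈ range (m + 1), F j := by
        rw [mul_comm, coeff_mul,
          Nat.sum_antidiagonal_eq_sum_range_succ fun a b => q.coeff a * p.coeff b]
        refine sum_congr rfl fun j hj => ?_
        rw [mem_range] at hj
        simp only [F, intCoeff_sub_natCast, if_pos (Nat.le_of_lt_succ hj), mul_comm]
    _ = ∑ j ∈ range (m + 1 + n), F j := by
        refine sum_subset (range_subset_range.2 (by omega)) fun j _ hj => ?_
        simp only [mem_range, not_lt] at hj
        simp only [F, intCoeff_of_neg p (by omega : (m : ℤ) - j < 0), zero_mul]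
    _ = ∑ j ∈ range n, F j := by
        refine (sum_subset (range_subset_range.2 (by omega)) fun j _ hj => ?_).symm
        simp only [mem_range, not_lt] at hj
        simp only [F, (degree_lt_iff_coeff_zero q n).1 hq j hj, mul_zero]
    _ = ∑ j : Fin n, intCoeff p (m - j) * q.coeff j := (Fin.sum_univ_eq_sum_range F n).symm

/-- The matrix whose `(i, j)` entry is the coefficient of `X ^ (a * i - j)` in `p`: the lower
triangular Toeplitz matrix of `p` for `a = 1`, its Hurwitz matrix for `a = 2`. -/
def coeffMatrix (p : R[X]) (n a : ℕ) : Matrix (Fin n) (Fin n) R :=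
  of fun i j => intCoeff p (a * (i : ℕ) - j)

lemma coeffMatrix_mul_of_coeff {n : ℕ} (p : R[X]) (a : ℕ) (q : Fin n → R[X])
    (hq : ∀ k, (q k).degree < n) :
    coeffMatrix p n a * of (fun (j : Fin n) k => (q k).coeff j)
      = of fun (i : Fin n) k => (p * q k).coeff (a * i) := by
  ext i k
  simp [mul_apply, coeffMatrix, coeff_mul_eq_sum_intCoeff p (q k) (hq k)]

lemma coeffMatrix_map {n : ℕ} (f : R →+* S) (p : R[X]) (a : ℕ) :
    coeffMatrix (p.map f) n a = (coeffMatrix p n a).map f := by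
  ext i j
  simp [coeffMatrix, intCoeff_map]

lemma det_coeffMatrix_one {n : ℕ} (p : R[X]) (hp : p.coeff 0 = 1) :
    (coeffMatrix p n 1).det = 1 := by
  rw [det_of_isLowerTriangular]
  · simp [coeffMatrix, intCoeff, hp]
  · intro i j hij
    have : (i : ℕ) < j := hij
    simp only [coeffMatrix, of_apply]
    exact intCoeff_of_neg p (by omega)

lemma det_coeffMatrix_succ {n : ℕ} (p : R[X]) (hp : p.coeff 0 = 1) (a : ℕ) :
    (coeffMatrix p (n + 1) a).det
      = ((coeffMatrix p (n + 1) a).submatrix Fin.succ Fin.succ).det := by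
  have hrow : ∀ j : Fin (n + 1), coeffMatrix p (n + 1) a 0 j = if j = 0 then 1 else 0 := by
    intro j
    split_ifs with hj
    · subst hj
      simpa [coeffMatrix, intCoeff] using hp
    · have : (j : ℕ) ≠ 0 := fun h => hj (Fin.ext h)
      exact intCoeff_of_neg p (by simp only [Fin.val_zero]; omega)
  rw [det_succ_row_zero, Fin.sum_univ_succ]
  simp [hrow, Fin.succ_ne_zero]

def esymmPoly {ι : Type*} (s : Finset ι) (x : ι → R) : R[X] :=
  ∏ i ∈ s, (1 + C (x i) * X)

section esymmPoly
variable {ι : Type*} (s : Finset ι) (x : ι → R)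

lemma coeff_esymmPoly (k : ℕ) :
    (esymmPoly s x).coeff k = ∑ t ∈ s.powersetCard k, ∏ i ∈ t, x i := by
  simp_rw [esymmPoly, prod_one_add, finsetSum_coeff, prod_mul_distrib, prod_const, ← map_prod,
    coeff_C_mul_X_pow, powersetCard_eq_filter, sum_filter, eq_comm]

lemma coeff_esymmPoly_zero : (esymmPoly s x).coeff 0 = 1 := by
  simp [coeff_esymmPoly]

lemma degree_esymmPoly_le : (esymmPoly s x).degree ≤ #s := by
  refine (degree_le_iff_coeff_zero _ _).2 fun k hk => ?_
  rw [coeff_esymmPoly, powersetCard_eq_empty.2 (by exact_mod_cast hk), sum_empty]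

lemma esymmPoly_map (f : R →+* S) : (esymmPoly s x).map f = esymmPoly s (f ∘ x) := by
  simp [esymmPoly, Polynomial.map_prod]

end esymmPoly

def esymmEraseMatrix {n : ℕ} (y : Fin n → R) : Matrix (Fin n) (Fin n) R :=
  of fun i k => (esymmPoly (univ.erase k) y).coeff i

lemma esymmEraseMatrix_eq_mul_vandermonde {n : ℕ} (y : Fin n → R) :
    esymmEraseMatrix y = coeffMatrix (esymmPoly univ y) n 1 * (vandermonde (-y))ᵀ := by
  -- `G k` is `(1 + y k * X)⁻¹` truncated in degree `n`
  set G : Fin n → R[X] := fun k => ∑ j : Fin n, C ((-y k) ^ (j : ℕ)) * X ^ (j : ℕ)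
  have hV : (vandermonde (-y))ᵀ = of fun (j : Fin n) k => (G k).coeff j := by
    ext j k
    simp only [G, transpose_apply, vandermonde_apply, of_apply, finsetSum_coeff, coeff_C_mul_X_pow,
      Fin.val_inj, sum_ite_eq, mem_univ, if_true, Pi.neg_apply]
  have hG : ∀ k, esymmPoly univ y * G k
      = esymmPoly (univ.erase k) y * (1 - C ((-y k) ^ n) * X ^ n) := by
    intro k
    have hgeom : (1 - C (-y k) * X) * G k = 1 - C ((-y k) ^ n) * X ^ n := by
      simp only [G, C_pow, ← mul_pow]
      rw [Fin.sum_univ_eq_sum_range (fun j => (C (-y k) * X) ^ j), mul_neg_geom_sum]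
    simp only [esymmPoly]
    rw [← hgeom, ← mul_prod_erase univ _ (mem_univ k), map_neg]
    ring
  rw [hV, coeffMatrix_mul_of_coeff _ _ G fun k => degree_sum_fin_lt _]
  ext i k
  simp only [esymmEraseMatrix, of_apply, one_mul, hG, mul_sub, mul_one, coeff_sub, ← mul_assoc,
    coeff_mul_X_pow', if_neg (not_le.2 i.isLt), sub_zero]

lemma det_esymmEraseMatrix {n : ℕ} (y : Fin n → R) :
    (esymmEraseMatrix y).det = ∏ i, ∏ j ∈ Ioi i, (y i - y j) := by
  rw [esymmEraseMatrix_eq_mul_vandermonde, det_mul,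
    det_coeffMatrix_one _ (coeff_esymmPoly_zero _ _), det_transpose, det_vandermonde, one_mul]
  simp [neg_add_eq_sub]

lemma esymmPoly_mul_esymmPoly_erase_neg {n : ℕ} (x : Fin n → R) (k : Fin n) :
    esymmPoly univ x * esymmPoly (univ.erase k) (-x)
      = (1 + C (x k) * X) * expand R 2 (esymmPoly (univ.erase k) fun l => -x l ^ 2) := by
  simp only [esymmPoly]
  rw [← mul_prod_erase univ _ (mem_univ k), mul_assoc, ← prod_mul_distrib, map_prod]
  congr 1
  refine prod_congr rfl fun l _ => ?_
  simp only [Pi.neg_apply, map_add, map_one, map_mul, map_neg, map_pow, expand_C, expand_X]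
  ring

lemma coeffMatrix_two_mul_esymmEraseMatrix_neg {n : ℕ} (x : Fin n → R) :
    coeffMatrix (esymmPoly univ x) n 2 * esymmEraseMatrix (-x)
      = esymmEraseMatrix fun l => -x l ^ 2 := by
  have hdeg : ∀ k : Fin n, (esymmPoly (univ.erase k) (-x)).degree < n := fun k =>
    (degree_esymmPoly_le _ _).trans_lt <| by
      rw [card_erase_of_mem (mem_univ k), card_univ, Fintype.card_fin]
      exact_mod_cast Nat.sub_lt k.pos one_pos
  unfold esymmEraseMatrix
  rw [coeffMatrix_mul_of_coeff _ _ _ hdeg]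
  ext i k
  have hodd :
      (X * expand R 2 (esymmPoly (univ.erase k) fun l => -x l ^ 2)).coeff (2 * i) = 0 := by
    rw [← pow_one X, coeff_X_pow_mul', coeff_expand two_pos]
    split_ifs <;> first | rfl | omega
  rw [of_apply, of_apply, esymmPoly_mul_esymmPoly_erase_neg, add_mul, one_mul, coeff_add,
    mul_assoc, coeff_C_mul, hodd, mul_zero, add_zero, coeff_expand two_pos,
    if_pos (dvd_mul_right 2 _), Nat.mul_div_cancel_left _ two_pos]

lemma det_coeffMatrix_two_esymmPoly_of_injective [IsDomain R] {n : ℕ} {x : Fin n → R}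
    (hx : Function.Injective x) :
    (coeffMatrix (esymmPoly univ x) n 2).det = ∏ i, ∏ j ∈ Ioi i, (x i + x j) := by
  have h := congrArg det (coeffMatrix_two_mul_esymmEraseMatrix_neg x)
  rw [det_mul, det_esymmEraseMatrix, det_esymmEraseMatrix] at h
  have hV : ∏ i, ∏ j ∈ Ioi i, ((-x) i - (-x) j) ≠ 0 :=
    prod_ne_zero_iff.2 fun i _ => prod_ne_zero_iff.2 fun j hj =>
      sub_ne_zero.2 <| neg_injective.ne <| hx.ne (mem_Ioi.1 hj).ne
  refine mul_right_cancel₀ hV ?_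
  rw [h, ← prod_mul_distrib]
  refine prod_congr rfl fun i _ => ?_
  rw [← prod_mul_distrib]
  exact prod_congr rfl fun j _ => by simp only [Pi.neg_apply]; ring

lemma det_coeffMatrix_two_esymmPoly {n : ℕ} (x : Fin n → R) :
    (coeffMatrix (esymmPoly univ x) n 2).det = ∏ i, ∏ j ∈ Ioi i, (x i + x j) := by
  set φ : MvPolynomial (Fin n) ℤ →+* R := MvPolynomial.eval₂Hom (Int.castRingHom R) x
  have hφ : φ ∘ MvPolynomial.X = x := funext fun i => MvPolynomial.eval₂Hom_X' _ _ _
  have h := congrArg φ (det_coeffMatrix_two_esymmPoly_of_injective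
    (MvPolynomial.X_injective (σ := Fin n) (R := ℤ)))
  rw [RingHom.map_det, RingHom.mapMatrix_apply, ← coeffMatrix_map, esymmPoly_map, hφ] at h
  simpa [φ, map_prod] using h

lemma minorSumC_eq_intCoeff {n : ℕ} {M : Matrix (Fin n) (Fin n) ℂ} {lam : Fin n → ℂ}
    (hlam : M.charpoly = ∏ i, (X - C (lam i))) (k : ℤ) :
    minorSumC n M k = intCoeff (esymmPoly univ lam) k := by
  unfold minorSumC intCoeff
  split_ifs with hk hk'
  · have hroots : M.charpoly = ∏ i, (X + C (-lam i)) := by simp [hlam, sub_eq_add_neg]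
    rw [hroots, prod_X_add_C_coeff _ _ (by simp), card_univ, Fintype.card_fin,
      Nat.sub_sub_self (by omega), coeff_esymmPoly, mul_sum]
    refine sum_congr rfl fun t ht => ?_
    rw [prod_neg, (mem_powersetCard.1 ht).2, ← mul_assoc, ← mul_pow]
    norm_num
  · exact absurd hk.1 hk'
  · rw [coeff_esymmPoly, powersetCard_eq_empty.2 (by rw [card_univ, Fintype.card_fin]; omega), sum_empty]
  · rfl

end

theorem det_secondAdditiveCompound_eq_det_minorSum_matrix_general
    (n : ℕ) (M : Matrix (Fin n) (Fin n) ℂ) (lam : Fin n → ℂ)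
    (hlam : Matrix.charpoly M = ∏ i : Fin n, (Polynomial.X - Polynomial.C (lam i))) :
    (∏ j : Fin n, ∏ i ∈ Finset.Iio j, (lam i + lam j)) =
      Matrix.det (Matrix.of fun i j : Fin (n - 1) =>
        minorSumC n M (2 * ((i : ℕ) : ℤ) + 2 - (((j : ℕ) : ℤ) + 1))) := by
  cases n with
  | zero => simp
  | succ n =>
    have hswap : ∏ j, ∏ i ∈ Iio j, (lam i + lam j) = ∏ i, ∏ j ∈ Ioi i, (lam i + lam j) :=
      (prod_comm' fun i j => by simp).symm
    rw [hswap, ← det_coeffMatrix_two_esymmPoly, det_coeffMatrix_succ _ (coeff_esymmPoly_zero _ _)]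
    congr 1
    ext i j
    simp only [submatrix_apply, coeffMatrix, of_apply, minorSumC_eq_intCoeff hlam, Fin.val_succ]
    push_cast
    ring_nf

theorem det_secondAdditiveCompound_eq_det_minorSum_matrix
    (n : ℕ) (hn : 2 ≤ n) (M : Matrix (Fin n) (Fin n) ℂ) (lam : Fin n → ℂ)
    (hlam : Matrix.charpoly M = ∏ i : Fin n, (Polynomial.X - Polynomial.C (lam i))) :
    (∏ j : Fin n, ∏ i ∈ Finset.Iio j, (lam i + lam j)) =
      Matrix.det (Matrix.of fun i j : Fin (n - 1) =>
        minorSumC n M (2 * ((i : ℕ) : ℤ) + 2 - (((j : ℕ) : ℤ) + 1))) :=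
  det_secondAdditiveCompound_eq_det_minorSum_matrix_general n M lam hlam
end

section
/- Let n ≥ 2 and let q_n be the unique polynomial in n variables over ℂ satisfying q_n(e_1(λ), e_2(λ), …, e_n(λ)) = ∏_{1 ≤ i < j ≤ n}(λ_i + λ_j) for all λ = (λ_1,…,λ_n) ∈ ℂ^n, where e_k is the k-th elementary symmetric polynomial. Then q_n has total degree n − 1 and q_n is irreducible as an element of ℂ[J_1,…,J_n]. -/
/-- The `k`-th elementary symmetric function of `lam : Fin n → ℂ`. -/
noncomputable def esym (n : ℕ) (lam : Fin n → ℂ) (k : ℕ) : ℂ :=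
  ∑ s ∈ Finset.powersetCard k (Finset.univ : Finset (Fin n)), ∏ i ∈ s, lam i

/-!
Let `Ψ : q ↦ q(e₁, …, eₙ)` and `P = ∏_{i<j} (Xᵢ + Xⱼ)`, so that `Ψ q = P`.

Degree: in the lexicographic order the leading monomial of `Ψ (X^t)` is `accumulate t`, whose
`X₀`-exponent is `|t|`. As `accumulate` is injective, no cancellation occurs among the leading
monomials, so the `X₀`-exponent of the leading monomial of `Ψ q` is `deg q`. For `P` that exponent
counts the factors `X₀ + Xⱼ`, i.e. it is `n - 1`.

Irreducibility: `P` is a squarefree product of the pairwise non-associated primes `Xᵢ + Xⱼ`.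
If `q = a * b` with `a`, `b` non-units, then `Ψ a`, `Ψ b` are symmetric non-unit divisors of `P`.
Each contains some prime factor `Xᵢ + Xⱼ` and, being symmetric, then also `X₀ + X₁`;
so `(X₀ + X₁)²` divides `P`, which is absurd.
-/

open MvPolynomial Finset AddMonoidAlgebra

theorem Finsupp.apply_zero_le_of_toLex_le {n : ℕ} [NeZero n] {x y : Fin n →₀ ℕ}
    (h : toLex x ≤ toLex y) : x 0 ≤ y 0 := by
  by_contra! hlt
  exact h.not_gt (Finsupp.Lex.lt_iff.2 ⟨0, fun k hk => absurd hk (Fin.not_lt_zero k), hlt⟩)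

namespace MvPolynomial

variable {n : ℕ}

section esymmAlgHom

variable {R : Type*} [CommRing R]

theorem esymmAlgHom_eq_sum_esymmAlgHomMonomial (q : MvPolynomial (Fin n) R) :
    (esymmAlgHom (Fin n) R n q).val =
      ∑ t ∈ q.support, esymmAlgHomMonomial (Fin n) t (q.coeff t) := by
  conv_lhs => rw [q.as_sum, map_sum]
  exact AddSubmonoidClass.coe_finsetSum _ _

theorem exists_supDegree_esymmAlgHom_eq {q : MvPolynomial (Fin n) R} (hq : q ≠ 0) :
    ∃ b ∈ q.support,
      supDegree toLex (esymmAlgHom (Fin n) R n q).val =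
        supDegree toLex (esymmAlgHomMonomial (Fin n) b (q.coeff b)) ∧
      ∀ t ∈ q.support, supDegree toLex (esymmAlgHomMonomial (Fin n) t (q.coeff t)) ≤
        supDegree toLex (esymmAlgHomMonomial (Fin n) b (q.coeff b)) := by
  set M := fun t => esymmAlgHomMonomial (Fin n) t (q.coeff t)
  obtain ⟨b, hb, hmax⟩ :=
    q.support.exists_max_image (supDegree toLex ∘ M) (support_nonempty.2 hq)
  have hinj : Set.InjOn (supDegree toLex ∘ M) q.support := fun t ht s hs he => by
    rw [mem_coe, mem_support_iff] at ht hs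
    refine DFunLike.ext' (Fin.accumulate_injective le_rfl ?_)
    rw [← supDegree_esymmAlgHomMonomial ht t le_rfl, ← supDegree_esymmAlgHomMonomial hs s le_rfl]
    exact congrArg (fun d : Lex (Fin n →₀ ℕ) => ⇑(ofLex d)) he
  refine ⟨b, hb, ?_, hmax⟩
  rw [esymmAlgHom_eq_sum_esymmAlgHomMonomial]
  exact (supDegree_leadingCoeff_sum_eq hb fun t ht htb =>
    (hmax t ht).lt_of_ne (hinj.ne ht hb htb)).1

theorem lex_degree_esymmAlgHom_apply_zero [NeZero n] (q : MvPolynomial (Fin n) R) :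
    MonomialOrder.lex.degree (esymmAlgHom (Fin n) R n q).val 0 = q.totalDegree := by
  rcases eq_or_ne q 0 with rfl | hq
  · simp
  have hdeg (t) (ht : t ∈ q.support) :
      (ofLex (supDegree toLex (esymmAlgHomMonomial (Fin n) t (q.coeff t))) : Fin n →₀ ℕ) 0 =
        t.sum fun _ e => e := by
    rw [supDegree_esymmAlgHomMonomial (mem_support_iff.1 ht) t le_rfl]
    simp [Fin.accumulate_apply, Finsupp.sum_fintype]
  obtain ⟨b, hb, hsup, hmax⟩ := exists_supDegree_esymmAlgHom_eq hq
  change (ofLex (supDegree toLex _) : Fin n →₀ ℕ) 0 = _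
  rw [hsup, hdeg b hb]
  refine le_antisymm (le_totalDegree hb) (Finset.sup_le fun t ht => ?_)
  rw [← hdeg t ht, ← hdeg b hb]
  exact Finsupp.apply_zero_le_of_toLex_le (hmax t ht)

theorem isUnit_of_isUnit_esymmAlgHom [IsReduced R] {a : MvPolynomial (Fin n) R}
    (h : IsUnit (esymmAlgHom (Fin n) R n a).val) : IsUnit a := by
  obtain ⟨r, hr, hrC⟩ := isUnit_iff_eq_C_of_isReduced.1 h
  have : a = C r := esymmAlgHom_fin_injective R le_rfl <| Subtype.ext <| by
    rw [hrC, ← algebraMap_eq, AlgHom.commutes]; rfl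
  exact this ▸ hr.map C

end esymmAlgHom

section pairSums

variable (n) (R : Type*) [CommSemiring R]

noncomputable def prodPairSums : MvPolynomial (Fin n) R :=
  ∏ j : Fin n, ∏ i ∈ Iio j, (X i + X j)

variable {n R} [Nontrivial R]

theorem lex_degree_X_add_X {i j : Fin n} (h : i < j) :
    MonomialOrder.lex.degree (X i + X j : MvPolynomial (Fin n) R) = Finsupp.single i 1 := by
  rw [MonomialOrder.degree_add_of_lt, MonomialOrder.degree_X]
  rw [MonomialOrder.degree_X, MonomialOrder.degree_X]
  exact Finsupp.Lex.single_lt_iff.2 h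

theorem X_add_X_ne_zero {i j : Fin n} (h : i ≠ j) : (X i + X j : MvPolynomial (Fin n) R) ≠ 0 := by
  intro h0
  simpa [coeff_X, Finsupp.single_left_inj, h.symm] using congrArg (coeff (Finsupp.single i 1)) h0

variable [NoZeroDivisors R]

theorem prod_Iio_X_add_X_ne_zero (j : Fin n) :
    ∏ i ∈ Iio j, (X i + X j : MvPolynomial (Fin n) R) ≠ 0 :=
  prod_ne_zero_iff.2 fun _ hi => X_add_X_ne_zero (mem_Iio.1 hi).ne

theorem prodPairSums_ne_zero : prodPairSums n R ≠ 0 :=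
  prod_ne_zero_iff.2 fun j _ => prod_Iio_X_add_X_ne_zero j

theorem lex_degree_prodPairSums_apply_zero [NeZero n] :
    MonomialOrder.lex.degree (prodPairSums n R) 0 = n - 1 := by
  classical
  have hinner (j : Fin n) :
      MonomialOrder.lex.degree (∏ i ∈ Iio j, (X i + X j : MvPolynomial (Fin n) R)) =
        ∑ i ∈ Iio j, Finsupp.single i 1 := by
    rw [MonomialOrder.degree_prod fun _ hi => X_add_X_ne_zero (mem_Iio.1 hi).ne]
    exact sum_congr rfl fun i hi => lex_degree_X_add_X (mem_Iio.1 hi)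
  rw [prodPairSums, MonomialOrder.degree_prod fun j _ => prod_Iio_X_add_X_ne_zero j]
  simp only [hinner, Finsupp.finsetSum_apply, Finsupp.single_apply, sum_ite_eq', mem_Iio,
    sum_boole, Nat.cast_id, filter_lt_eq_Ioi, Fin.card_Ioi, Fin.val_zero, Nat.sub_zero]

end pairSums

theorem irreducible_X_add_X {R : Type*} [CommRing R] [IsDomain R] {i j : Fin n} (h : i ≠ j) :
    Irreducible (X i + X j : MvPolynomial (Fin n) R) := by
  refine irreducible_of_totalDegree_eq_one ?_ fun r hr => isUnit_of_dvd_one ?_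
  · exact ((isHomogeneous_X R i).add (isHomogeneous_X R j)).totalDegree (X_add_X_ne_zero h)
  · simpa [coeff_X, Finsupp.single_left_inj, h.symm] using hr (Finsupp.single i 1)

/-- Evaluating at `xᵢ = 1`, `xⱼ = -1` and `3` elsewhere kills `Xₖ + Xₗ` only for
`{k, l} = {i, j}`. -/
theorem eq_of_X_add_X_dvd {R : Type*} [CommRing R] [CharZero R] {i j k l : Fin n} (hij : i < j)
    (hkl : k < l) (h : (X i + X j : MvPolynomial (Fin n) R) ∣ X k + X l) : i = k ∧ j = l := by
  set x : Fin n → R := fun m => if m = i then 1 else if m = j then -1 else 3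
  have hx : x k + x l = 0 := by
    obtain ⟨c, hc⟩ := h
    simpa [x, hij.ne'] using congrArg (eval x) hc
  simp only [x] at hx
  split_ifs at hx <;> subst_vars <;>
    first | exact ⟨rfl, rfl⟩ | exact absurd hkl hij.asymm | norm_num at hx

theorem squarefree_prodPairSums {K : Type*} [Field K] [CharZero K] :
    Squarefree (prodPairSums n K) := by
  classical
  have hpairs : prodPairSums n K =
      ∏ p ∈ univ.filter (fun p : Fin n × Fin n => p.1 < p.2), (X p.1 + X p.2) :=
    (prod_finset_product_right' _ _ _ fun p => by simp).symm
  rw [hpairs]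
  refine squarefree_prod_of_pairwise_isCoprime (fun p hp p' hp' hne => ?_)
    fun p hp => (irreducible_X_add_X (mem_filter.1 hp).2.ne).squarefree
  rw [mem_coe, mem_filter] at hp hp'
  refine (irreducible_X_add_X hp.2.ne).isRelPrime_iff_not_dvd.2 fun hdvd => hne ?_
  obtain ⟨h1, h2⟩ := eq_of_X_add_X_dvd hp.2 hp'.2 hdvd
  exact Prod.ext h1 h2

theorem IsSymmetric.X_add_X_dvd {σ R : Type*} [CommSemiring R] [DecidableEq σ]
    {F : MvPolynomial σ R} (hF : F.IsSymmetric) {i₀ j₀ i j : σ} (h₀ : i₀ ≠ j₀) (h : i ≠ j)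
    (hdvd : X i₀ + X j₀ ∣ F) : X i + X j ∣ F := by
  set τ := Equiv.swap i₀ i
  have hτ : τ j₀ ≠ i := fun he =>
    h₀ (τ.injective (he.trans (Equiv.swap_apply_left i₀ i).symm)).symm
  set g := τ.trans (Equiv.swap (τ j₀) j)
  have hgi : g i₀ = i := by
    simp only [g, Equiv.trans_apply, Equiv.swap_apply_left, τ]
    exact Equiv.swap_apply_of_ne_of_ne hτ.symm h
  have hgj : g j₀ = j := Equiv.swap_apply_left _ _
  calc X i + X j = rename g (X i₀ + X j₀) := by rw [map_add, rename_X, rename_X, hgi, hgj]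
    _ ∣ rename g F := map_dvd _ hdvd
    _ = F := hF g

theorem IsSymmetric.X_add_X_dvd_of_dvd_prodPairSums {K : Type*} [Field K]
    {F : MvPolynomial (Fin n) K} (hF : F.IsSymmetric) (hFP : F ∣ prodPairSums n K)
    (hF1 : ¬IsUnit F) {i j : Fin n} (hij : i ≠ j) : X i + X j ∣ F := by
  have hF0 : F ≠ 0 := by rintro rfl; exact prodPairSums_ne_zero (zero_dvd_iff.1 hFP)
  obtain ⟨π, hπ, hπF⟩ := WfDvdMonoid.exists_irreducible_factor hF1 hF0
  obtain ⟨j', -, hj'⟩ := hπ.prime.exists_mem_finset_dvd (hπF.trans hFP)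
  obtain ⟨i', hi', hi'j'⟩ := hπ.prime.exists_mem_finset_dvd hj'
  have hlt : i' < j' := mem_Iio.1 hi'
  have hassoc := hπ.associated_of_dvd (irreducible_X_add_X hlt.ne) hi'j'
  exact hF.X_add_X_dvd hlt.ne hij (hassoc.symm.dvd.trans hπF)

theorem eval_esymm_eq_esym (lam : Fin n → ℂ) (k : ℕ) : eval lam (esymm (Fin n) ℂ k) = esym n lam k := by
  simp [esymm, esym, map_sum, map_prod]

theorem esymmAlgHom_eq_prodPairSums {q : MvPolynomial (Fin n) ℂ}
    (hq : ∀ lam : Fin n → ℂ, eval (fun i : Fin n => esym n lam ((i : ℕ) + 1)) q =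
      ∏ j : Fin n, ∏ i ∈ Iio j, (lam i + lam j)) :
    (esymmAlgHom (Fin n) ℂ n q).val = prodPairSums n ℂ := by
  refine MvPolynomial.funext fun lam => ?_
  have hbind : eval lam (bind₁ (fun i : Fin n => esymm (Fin n) ℂ (i + 1)) q) =
      eval (fun i : Fin n => eval lam (esymm (Fin n) ℂ (i + 1))) q :=
    eval₂Hom_bind₁ _ _ _ _
  rw [esymmAlgHom_apply, aeval_eq_bind₁, hbind]
  simp only [eval_esymm_eq_esym, hq, prodPairSums, map_prod, map_add, eval_X]

end MvPolynomial

theorem qn_degree_and_irreducible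
    (n : ℕ) (hn : 2 ≤ n) (q : MvPolynomial (Fin n) ℂ)
    (hq : ∀ lam : Fin n → ℂ,
      MvPolynomial.eval (fun i : Fin n => esym n lam ((i : ℕ) + 1)) q =
        ∏ j : Fin n, ∏ i ∈ Finset.Iio j, (lam i + lam j)) :
    q.totalDegree = n - 1 ∧ Irreducible q := by
  have : NeZero n := ⟨by omega⟩
  set Ψ := esymmAlgHom (Fin n) ℂ n
  have hΨq : (Ψ q).val = prodPairSums n ℂ := esymmAlgHom_eq_prodPairSums hq
  have hdeg : q.totalDegree = n - 1 := by
    rw [← lex_degree_esymmAlgHom_apply_zero, hΨq, lex_degree_prodPairSums_apply_zero]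
  refine ⟨hdeg, ⟨fun hu => ?_, fun a b hab => ?_⟩⟩
  · have := (isUnit_iff_totalDegree_of_isReduced.1 hu).2
    omega
  have h01 : (⟨0, by omega⟩ : Fin n) ≠ ⟨1, by omega⟩ := by simp
  have hΨab : (Ψ a).val * (Ψ b).val = prodPairSums n ℂ := by rw [← hΨq, hab, map_mul]; rfl
  by_contra! hnonunit
  have hdvd_a := (Ψ a).2.X_add_X_dvd_of_dvd_prodPairSums (Dvd.intro _ hΨab)
    (mt isUnit_of_isUnit_esymmAlgHom hnonunit.1) h01
  have hdvd_b := (Ψ b).2.X_add_X_dvd_of_dvd_prodPairSums (Dvd.intro_left _ hΨab)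
    (mt isUnit_of_isUnit_esymmAlgHom hnonunit.2) h01
  exact (irreducible_X_add_X h01).not_isUnit
    (squarefree_prodPairSums _ (hΨab ▸ mul_dvd_mul hdvd_a hdvd_b))
end

section
/- Let p be a real polynomial in k variables. For v ∈ ℝ^k, define the face polynomial p_v of p in direction v to be the sum of those terms c_α X^α of p whose exponent vectors α maximize the linear functional α ↦ v·α over the support of p (for p = 0, set p_v = 0). Then p(x) ≥ 0 for all x in the open positive orthant ℝ^k_{>0} if and only if for every v ∈ ℝ^k the face polynomial p_v satisfies p_v(x) ≥ 0 for all x ∈ ℝ^k_{>0}. -/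
/-!
Substituting `x i = y i * t ^ v i` turns `p` into a sum of terms `c_α y^α t^(v ⬝ α)`. Dividing by
`t ^ M`, where `M` is the largest exponent `v ⬝ α`, and letting `t → ∞` leaves exactly the face
polynomial `p_v` evaluated at `y`, so nonnegativity of `p` passes to the limit. Conversely `p_0 = p`.
-/

open Finset Filter Topology MvPolynomial

/-- The face polynomial of `p` in direction `v`: the sum of those terms of `p`
whose exponent vectors maximize the linear functional `α ↦ v ⬝ α` over the
support of `p` (equal to `0` when `p = 0`). -/
noncomputable def facePoly (k : ℕ) (p : MvPolynomial (Fin k) ℝ) (v : Fin k → ℝ) :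
    MvPolynomial (Fin k) ℝ :=
  ∑ α ∈ p.support.filter (fun α => ∀ β ∈ p.support,
      (∑ i, v i * (β i : ℝ)) ≤ ∑ i, v i * (α i : ℝ)),
    MvPolynomial.monomial α (MvPolynomial.coeff α p)

theorem tendsto_sum_mul_rpow_sub_sup' {ι : Type*} (s : Finset ι) (hs : s.Nonempty)
    (c e : ι → ℝ) :
    Tendsto (fun t : ℝ => ∑ i ∈ s, c i * t ^ (e i - s.sup' hs e)) atTop
      (𝓝 (∑ i ∈ s with ∀ j ∈ s, e j ≤ e i, c i)) := by
  rw [Finset.sum_filter]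
  refine tendsto_finsetSum _ fun i hi => ?_
  split_ifs with hmax
  · have hmax : e i = s.sup' hs e := le_antisymm (le_sup' e hi) (sup'_le hs e hmax)
    simp only [hmax, sub_self, Real.rpow_zero, mul_one, tendsto_const_nhds]
  · have hlt : e i < s.sup' hs e := by
      push Not at hmax
      obtain ⟨j, hj, hij⟩ := hmax
      exact hij.trans_le (le_sup' e hj)
    have h := (tendsto_rpow_neg_atTop (sub_pos.2 hlt)).const_mul (c i)
    simpa only [neg_sub, mul_zero] using h

theorem sum_filter_maximal_nonneg_of_eventually_nonneg {ι : Type*} (s : Finset ι)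
    (c e : ι → ℝ) (h : ∀ᶠ t in atTop, 0 ≤ ∑ i ∈ s, c i * t ^ e i) :
    0 ≤ ∑ i ∈ s with ∀ j ∈ s, e j ≤ e i, c i := by
  rcases s.eq_empty_or_nonempty with rfl | hs
  · simp
  refine ge_of_tendsto (tendsto_sum_mul_rpow_sub_sup' s hs c e) ?_
  filter_upwards [h, eventually_gt_atTop 0] with t ht tpos
  have hscale : ∑ i ∈ s, c i * t ^ (e i - s.sup' hs e)
      = t ^ (-s.sup' hs e) * ∑ i ∈ s, c i * t ^ e i := by
    rw [mul_sum]
    refine sum_congr rfl fun i _ => ?_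
    rw [sub_eq_add_neg, Real.rpow_add tpos]
    ring
  rw [hscale]
  exact mul_nonneg (Real.rpow_nonneg tpos.le _) ht

theorem MvPolynomial.eval_mul_rpow {σ : Type*} [Fintype σ] (p : MvPolynomial σ ℝ)
    (y v : σ → ℝ) {t : ℝ} (ht : 0 < t) :
    eval (fun i => y i * t ^ v i) p
      = ∑ α ∈ p.support, coeff α p * (∏ i, y i ^ α i) * t ^ (∑ i, v i * (α i : ℝ)) := by
  rw [eval_eq']
  refine sum_congr rfl fun α _ => ?_
  rw [mul_assoc, Real.rpow_sum_of_pos ht, ← prod_mul_distrib]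
  congr 1
  refine prod_congr rfl fun i _ => ?_
  rw [mul_pow, ← Real.rpow_natCast (t ^ v i), ← Real.rpow_mul ht.le]

theorem eval_facePoly (k : ℕ) (p : MvPolynomial (Fin k) ℝ) (v y : Fin k → ℝ) :
    eval y (facePoly k p v) = ∑ α ∈ p.support with ∀ β ∈ p.support,
      (∑ i, v i * (β i : ℝ)) ≤ ∑ i, v i * (α i : ℝ), coeff α p * ∏ i, y i ^ α i := by
  simp only [facePoly, map_sum, eval_monomial, Finsupp.prod_pow]

theorem facePoly_zero (k : ℕ) (p : MvPolynomial (Fin k) ℝ) : facePoly k p 0 = p := by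
  rw [facePoly, filter_true_of_mem (by simp)]
  exact (as_sum p).symm

theorem nonneg_on_positive_orthant_iff_all_faces_nonneg
    (k : ℕ) (p : MvPolynomial (Fin k) ℝ) :
    (∀ x : Fin k → ℝ, (∀ i, 0 < x i) → 0 ≤ MvPolynomial.eval x p) ↔
      (∀ v : Fin k → ℝ, ∀ x : Fin k → ℝ, (∀ i, 0 < x i) →
        0 ≤ MvPolynomial.eval x (facePoly k p v)) := by
  refine ⟨fun hp v y hy => ?_, fun h x hx => facePoly_zero k p ▸ h 0 x hx⟩
  rw [eval_facePoly]
  refine sum_filter_maximal_nonneg_of_eventually_nonneg _ _ _ ?_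
  filter_upwards [eventually_gt_atTop 0] with t ht
  rw [← eval_mul_rpow p y v ht]
  exact hp _ fun i => mul_pos (hy i) (Real.rpow_pos_of_pos ht _)
end

section
/- Let p be a real polynomial in k variables. Suppose there exist vectors v, w ∈ ℝ^k and exponent vectors α, γ in the support of p such that: the coefficient of X^α in p is positive, the coefficient of X^γ in p is negative, v·α > v·β for every β in the support of p with β ≠ α, and w·γ > w·β for every β in the support of p with β ≠ γ. Then p takes both strictly positive and strictly negative values on the open positive orthant ℝ^k_{>0}, i.e. p is sign-indefinite on the positive orthant. -/
/-!
Substitute `x_i = exp (t v_i)`: the monomial `X^β` becomes `exp (t ⟨v, β⟩)`, so as `t → ∞` the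
term of the unique `v`-maximal exponent `α` dominates and `p` takes the sign of its coefficient.
Applying this to `p` with `v, α` and to `-p` with `w, γ` gives both signs.
-/

open Filter Finset

lemma Real.prod_exp_mul_pow {σ : Type*} [Fintype σ] (v : σ → ℝ) (t : ℝ) (β : σ →₀ ℕ) :
    ∏ i, Real.exp (t * v i) ^ β i = Real.exp (t * ∑ i, v i * (β i : ℝ)) := by
  simp_rw [← Real.exp_nat_mul, ← Real.exp_sum, mul_sum]
  congr 1
  exact sum_congr rfl fun i _ => by ring

lemma MvPolynomial.eval_exp_mul {σ : Type*} [Fintype σ] (p : MvPolynomial σ ℝ) (v : σ → ℝ)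
    (t : ℝ) :
    eval (fun i => Real.exp (t * v i)) p =
      ∑ β ∈ p.support, coeff β p * Real.exp (t * ∑ i, v i * (β i : ℝ)) := by
  simp only [eval_eq', Real.prod_exp_mul_pow]

lemma tendsto_sum_mul_exp_mul_sub {ι : Type*} {s : Finset ι} {a : ι} (c d : ι → ℝ)
    (ha : a ∈ s) (hd : ∀ b ∈ s, b ≠ a → d b < d a) :
    Tendsto (fun t => ∑ b ∈ s, c b * Real.exp (t * (d b - d a))) atTop (nhds (c a)) := by
  classical
  have hlim : ∀ b ∈ s,
      Tendsto (fun t => c b * Real.exp (t * (d b - d a))) atTop (nhds (if b = a then c a else 0)) := by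
    intro b hb
    split_ifs with hba
    · subst hba
      simp only [sub_self, mul_zero, Real.exp_zero, mul_one, tendsto_const_nhds]
    · have hexp : Tendsto (fun t => Real.exp (t * (d b - d a))) atTop (nhds 0) :=
        Real.tendsto_exp_atBot.comp
          (tendsto_id.atTop_mul_const_of_neg (sub_neg.mpr (hd b hb hba)))
      simpa using hexp.const_mul (c b)
  simpa [sum_ite_eq', ha] using tendsto_finsetSum s hlim

lemma eventually_pos_sum_mul_exp {ι : Type*} {s : Finset ι} {a : ι} (c d : ι → ℝ)
    (ha : a ∈ s) (hc : 0 < c a) (hd : ∀ b ∈ s, b ≠ a → d b < d a) :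
    ∀ᶠ t in atTop, 0 < ∑ b ∈ s, c b * Real.exp (t * d b) := by
  filter_upwards [(tendsto_sum_mul_exp_mul_sub c d ha hd).eventually (lt_mem_nhds hc)] with t ht
  have hfactor : ∑ b ∈ s, c b * Real.exp (t * d b) =
      Real.exp (t * d a) * ∑ b ∈ s, c b * Real.exp (t * (d b - d a)) := by
    rw [mul_sum]
    refine sum_congr rfl fun b _ => ?_
    rw [show t * d b = t * d a + t * (d b - d a) by ring, Real.exp_add]
    ring
  rw [hfactor]
  exact mul_pos (Real.exp_pos _) ht

lemma MvPolynomial.exists_pos_eval_of_vertex_coeff_pos {σ : Type*} [Fintype σ]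
    (p : MvPolynomial σ ℝ) (v : σ → ℝ) {α : σ →₀ ℕ} (hα : α ∈ p.support)
    (hαpos : 0 < coeff α p)
    (hv : ∀ β ∈ p.support, β ≠ α → (∑ i, v i * (β i : ℝ)) < ∑ i, v i * (α i : ℝ)) :
    ∃ x : σ → ℝ, (∀ i, 0 < x i) ∧ 0 < eval x p := by
  obtain ⟨t, ht⟩ := (eventually_pos_sum_mul_exp (coeff · p) _ hα hαpos hv).exists
  exact ⟨fun i => Real.exp (t * v i), fun i => Real.exp_pos _, by rwa [eval_exp_mul]⟩

theorem mixed_vertices_implies_sign_indefinite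
    (k : ℕ) (p : MvPolynomial (Fin k) ℝ) (v w : Fin k → ℝ)
    (α γ : Fin k →₀ ℕ)
    (hα : α ∈ p.support) (hγ : γ ∈ p.support)
    (hαpos : 0 < MvPolynomial.coeff α p)
    (hγneg : MvPolynomial.coeff γ p < 0)
    (hv : ∀ β ∈ p.support, β ≠ α → (∑ i, v i * (β i : ℝ)) < ∑ i, v i * (α i : ℝ))
    (hw : ∀ β ∈ p.support, β ≠ γ → (∑ i, w i * (β i : ℝ)) < ∑ i, w i * (γ i : ℝ)) :
    (∃ x : Fin k → ℝ, (∀ i, 0 < x i) ∧ 0 < MvPolynomial.eval x p) ∧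
      (∃ y : Fin k → ℝ, (∀ i, 0 < y i) ∧ MvPolynomial.eval y p < 0) := by
  refine ⟨p.exists_pos_eval_of_vertex_coeff_pos v hα hαpos hv, ?_⟩
  have hsupport : (-p).support = p.support := MvPolynomial.support_neg _
  obtain ⟨y, hy, hneg⟩ := (-p).exists_pos_eval_of_vertex_coeff_pos w (hsupport ▸ hγ)
    (by rw [MvPolynomial.coeff_neg]; linarith) (hsupport ▸ hw)
  exact ⟨y, hy, by simpa using hneg⟩
end

section
/- Let A and B be n×n real sign patterns (n ≥ 2) with A a sub-pattern of B. Then: (i) if some M ∈ Q_A has D2(M) > 0, then some N ∈ Q_B has D2(N) > 0; (ii) if some M ∈ Q_A has D2(M) < 0, then some N ∈ Q_B has D2(N) < 0; (iii) if D2(N) = 0 for every N ∈ Q_B, then D2(M) = 0 for every M ∈ Q_A; (iv) if D2 takes both strictly positive and strictly negative values on Q_A, then D2 takes both strictly positive and strictly negative values on Q_B. -/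
/-- The `k`-th minor-sum of an `n × n` real matrix `M`: the sum of its `k × k`
principal minors, i.e. `(-1)^k` times the coefficient of `X^(n-k)` in the
characteristic polynomial; extended to integer indices by `0` outside `0 ≤ k ≤ n`. -/
noncomputable def minorSum (n : ℕ) (M : Matrix (Fin n) (Fin n) ℝ) (k : ℤ) : ℝ :=
  if 0 ≤ k ∧ k ≤ (n : ℤ) then (-1) ^ k.toNat * (Matrix.charpoly M).coeff (n - k.toNat)
  else 0

/-- The determinant of the second additive compound of `M`, computed as the
determinant of the `(n-1) × (n-1)` matrix whose `(i,j)` entry (1-indexed) is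
`J_{2i-j}(M)`. -/
noncomputable def D2 (n : ℕ) (M : Matrix (Fin n) (Fin n) ℝ) : ℝ :=
  Matrix.det (Matrix.of fun i j : Fin (n - 1) =>
    minorSum n M (2 * ((i : ℕ) : ℤ) + 2 - (((j : ℕ) : ℤ) + 1)))

/-- The qualitative class of a sign pattern `A`: all real matrices whose entries
have (entrywise) the same sign as those of `A`. -/
def qualClass (n : ℕ) (A : Matrix (Fin n) (Fin n) ℝ) : Set (Matrix (Fin n) (Fin n) ℝ) :=
  {M | ∀ i j, Real.sign (M i j) = Real.sign (A i j)}

/-- `A` is a sub-pattern of `B`: every entry of `A` is either zero or has the same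
strict sign as the corresponding entry of `B`. -/
def subPattern (n : ℕ) (A B : Matrix (Fin n) (Fin n) ℝ) : Prop :=
  ∀ i j, A i j = 0 ∨ Real.sign (A i j) = Real.sign (B i j)

/-!
`D2` is a polynomial in the matrix entries, hence continuous, and `Q_A` lies in the closure of
`Q_B`: perturbing the entries where `A` vanishes but `B` does not by a small multiple of `B`
moves a matrix of `Q_A` into `Q_B`. So every open set of values met by `D2` on `Q_A`, such as
`(0, ∞)`, `(-∞, 0)` or `ℝ \ {0}`, is also met on `Q_B`.
-/

open Filter Topology

theorem Matrix.continuous_charpoly_coeff {ι R : Type*} [Fintype ι] [DecidableEq ι] [CommRing R]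
    [TopologicalSpace R] [IsTopologicalRing R] (k : ℕ) :
    Continuous fun M : Matrix ι ι R => M.charpoly.coeff k := by
  have h_eval (M : Matrix ι ι R) : M.charpoly.coeff k =
      MvPolynomial.eval (Function.uncurry M) ((Matrix.charpoly.univ R ι).coeff k) :=
    (Matrix.charpoly.univ_coeff_eval₂Hom ι (RingHom.id R) (Function.uncurry M) k).symm
  simp only [h_eval]
  exact (MvPolynomial.continuous_eval _).comp (by fun_prop)

theorem continuous_minorSum (n : ℕ) (k : ℤ) :
    Continuous fun M : Matrix (Fin n) (Fin n) ℝ => minorSum n M k := by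
  unfold minorSum
  split_ifs
  · exact continuous_const.mul (Matrix.continuous_charpoly_coeff _)
  · exact continuous_const

theorem continuous_D2 (n : ℕ) : Continuous (D2 n) :=
  Continuous.matrix_det (continuous_matrix fun _ _ => continuous_minorSum n _)

theorem Real.sign_mul_of_pos_left {ε : ℝ} (hε : 0 < ε) (x : ℝ) :
    Real.sign (ε * x) = Real.sign x := by
  rcases lt_trichotomy x 0 with hx | rfl | hx
  · rw [Real.sign_of_neg hx, Real.sign_of_neg (mul_neg_of_pos_of_neg hε hx)]
  · rw [mul_zero]
  · rw [Real.sign_of_pos hx, Real.sign_of_pos (mul_pos hε hx)]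

theorem qualClass_subset_closure_qualClass {n : ℕ} {A B : Matrix (Fin n) (Fin n) ℝ}
    (hAB : subPattern n A B) : qualClass n A ⊆ closure (qualClass n B) := by
  intro M hM
  let P : Matrix (Fin n) (Fin n) ℝ := Matrix.of fun i j => if A i j = 0 then B i j else 0
  have h_mem (ε : ℝ) (hε : 0 < ε) : M + ε • P ∈ qualClass n B := by
    intro i j
    by_cases hA : A i j = 0
    · have hM0 : M i j = 0 := Real.sign_eq_zero_iff.mp (by rw [hM i j, hA, Real.sign_zero])
      simp only [P, Matrix.add_apply, Matrix.smul_apply, Matrix.of_apply, if_pos hA, hM0,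
        zero_add, smul_eq_mul, Real.sign_mul_of_pos_left hε]
    · simp only [P, Matrix.add_apply, Matrix.smul_apply, Matrix.of_apply, if_neg hA, smul_zero,
        add_zero, hM i j, (hAB i j).resolve_left hA]
  have h_tendsto : Tendsto (fun ε : ℝ => M + ε • P) (𝓝[>] 0) (𝓝 M) := by
    have h_cont : Continuous fun ε : ℝ => M + ε • P := by fun_prop
    exact (h_cont.tendsto' 0 M (by simp)).mono_left nhdsWithin_le_nhds
  exact mem_closure_of_tendsto h_tendsto (eventually_nhdsWithin_of_forall h_mem)

theorem exists_mem_qualClass_of_subPattern {X : Type*} [TopologicalSpace X] {n : ℕ}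
    {A B : Matrix (Fin n) (Fin n) ℝ} (hAB : subPattern n A B)
    {f : Matrix (Fin n) (Fin n) ℝ → X} (hf : Continuous f) {U : Set X} (hU : IsOpen U)
    {M : Matrix (Fin n) (Fin n) ℝ} (hM : M ∈ qualClass n A) (hfM : f M ∈ U) :
    ∃ N ∈ qualClass n B, f N ∈ U := by
  obtain ⟨N, hNU, hN⟩ :=
    mem_closure_iff.mp (qualClass_subset_closure_qualClass hAB hM) _ (hU.preimage hf) hfM
  exact ⟨N, hN, hNU⟩

theorem D2_inheritance_general
    (n : ℕ) (A B : Matrix (Fin n) (Fin n) ℝ)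
    (hAB : subPattern n A B) :
    ((∃ M ∈ qualClass n A, 0 < D2 n M) → ∃ N ∈ qualClass n B, 0 < D2 n N) ∧
    ((∃ M ∈ qualClass n A, D2 n M < 0) → ∃ N ∈ qualClass n B, D2 n N < 0) ∧
    ((∀ N ∈ qualClass n B, D2 n N = 0) → ∀ M ∈ qualClass n A, D2 n M = 0) ∧
    (((∃ M ∈ qualClass n A, 0 < D2 n M) ∧ (∃ M ∈ qualClass n A, D2 n M < 0)) →
      ((∃ N ∈ qualClass n B, 0 < D2 n N) ∧ (∃ N ∈ qualClass n B, D2 n N < 0))) := by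
  have h_inherit {U : Set ℝ} (hU : IsOpen U) :
      (∃ M ∈ qualClass n A, D2 n M ∈ U) → ∃ N ∈ qualClass n B, D2 n N ∈ U :=
    fun ⟨_, hM, hMU⟩ => exists_mem_qualClass_of_subPattern hAB (continuous_D2 n) hU hM hMU
  have h_pos := h_inherit (U := Set.Ioi 0) isOpen_Ioi
  have h_neg := h_inherit (U := Set.Iio 0) isOpen_Iio
  refine ⟨h_pos, h_neg, fun hB M hM => ?_, fun ⟨hp, hn⟩ => ⟨h_pos hp, h_neg hn⟩⟩
  by_contra hM0
  obtain ⟨N, hN, hN0⟩ := h_inherit (U := {0}ᶜ) isOpen_compl_singleton ⟨M, hM, hM0⟩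
  exact hN0 (hB N hN)

theorem D2_inheritance
    (n : ℕ) (hn : 2 ≤ n) (A B : Matrix (Fin n) (Fin n) ℝ)
    (hAB : subPattern n A B) :
    ((∃ M ∈ qualClass n A, 0 < D2 n M) → ∃ N ∈ qualClass n B, 0 < D2 n N) ∧
    ((∃ M ∈ qualClass n A, D2 n M < 0) → ∃ N ∈ qualClass n B, D2 n N < 0) ∧
    ((∀ N ∈ qualClass n B, D2 n N = 0) → ∀ M ∈ qualClass n A, D2 n M = 0) ∧
    (((∃ M ∈ qualClass n A, 0 < D2 n M) ∧ (∃ M ∈ qualClass n A, D2 n M < 0)) →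
      ((∃ N ∈ qualClass n B, 0 < D2 n N) ∧ (∃ N ∈ qualClass n B, D2 n N < 0))) :=
  D2_inheritance_general n A B hAB
end

section
/- Let n ≥ 2 and let M be an n×n real matrix whose associated digraph is bipartite; that is, suppose there exists a function c from {1,…,n} to {0,1} such that M_{ij} ≠ 0 implies c(i) ≠ c(j). Then D2(M) = 0. -/
/-!
A two-colouring `c` of the digraph of `M` gives the signature `S = diag((-1)^{c i})` with
`S M S = -M`, and the same holds for every principal submatrix. Hence a principal minor of odd
order equals its own negative and vanishes, so `J_k(M) = 0` for odd `k`. The first column of the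
matrix defining `D2 M` is `(J_1, J_3, J_5, …)`, so it is zero.
-/

open Finset

namespace Matrix

variable {ι R : Type*} [Fintype ι] [DecidableEq ι] [CommRing R]

theorem diagonal_neg_one_pow_mul_mul_diagonal_neg_one_pow {M : Matrix ι ι R} {c : ι → Fin 2}
    (hc : ∀ i j, M i j ≠ 0 → c i ≠ c j) :
    diagonal (fun i => (-1 : R) ^ (c i : ℕ)) * M * diagonal (fun i => (-1 : R) ^ (c i : ℕ))
      = -M := by
  ext i j
  rw [mul_diagonal, diagonal_mul, neg_apply]
  by_cases hM : M i j = 0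
  · simp [hM]
  · have hsum : (c i : ℕ) + c j = 1 := by have := hc i j hM; omega
    rw [mul_right_comm, ← pow_add, hsum, pow_one, neg_one_mul]

theorem det_neg_eq_det_of_bipartite {M : Matrix ι ι R} {c : ι → Fin 2}
    (hc : ∀ i j, M i j ≠ 0 → c i ≠ c j) :
    det (-M) = det M := by
  set S := diagonal (fun i => (-1 : R) ^ (c i : ℕ))
  have hSS : S * S = 1 := by
    simp only [S, diagonal_mul_diagonal, ← pow_add, ← two_mul, pow_mul, neg_one_sq, one_pow,
      diagonal_one]
  rw [← diagonal_neg_one_pow_mul_mul_diagonal_neg_one_pow hc, det_mul, det_mul,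
    mul_right_comm, ← det_mul, hSS, det_one, one_mul]

theorem det_eq_zero_of_bipartite_of_odd_card [IsAddTorsionFree R] {M : Matrix ι ι R}
    {c : ι → Fin 2} (hc : ∀ i j, M i j ≠ 0 → c i ≠ c j) (hodd : Odd (Fintype.card ι)) :
    det M = 0 :=
  self_eq_neg.mp <| calc
    det M = det (-M) := (det_neg_eq_det_of_bipartite hc).symm
    _ = -det M := by rw [det_neg, hodd.neg_one_pow, neg_one_mul]

end Matrix

open Matrix

theorem minorSum_natCast_eq_sum_det_submatrix (n : ℕ) (M : Matrix (Fin n) (Fin n) ℝ) (k : ℕ) :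
    minorSum n M k =
      ∑ s ∈ powersetCard k (univ : Finset (Fin n)), (M.submatrix ((↑) : s → Fin n) (↑)).det := by
  unfold minorSum
  split_ifs with hk
  · have hkn : k ≤ Fintype.card (Fin n) := by rw [Fintype.card_fin]; omega
    have := charpoly_coeff_eq_sum_minors M k hkn
    rw [Fintype.card_fin] at this
    rw [Int.toNat_natCast, this, ← mul_assoc, ← pow_add, ← two_mul, pow_mul, neg_one_sq, one_pow,
      one_mul]
  · rw [powersetCard_eq_empty.mpr (by rw [card_univ, Fintype.card_fin]; omega), sum_empty]

theorem minorSum_eq_zero_of_bipartite_of_odd (n : ℕ) (M : Matrix (Fin n) (Fin n) ℝ)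
    {c : Fin n → Fin 2} (hc : ∀ i j, M i j ≠ 0 → c i ≠ c j) {k : ℕ} (hk : Odd k) :
    minorSum n M k = 0 := by
  rw [minorSum_natCast_eq_sum_det_submatrix]
  refine sum_eq_zero fun s hs => det_eq_zero_of_bipartite_of_odd_card (c := c ∘ Subtype.val)
    (fun i j h => hc i j h) ?_
  rwa [Fintype.card_coe, (mem_powersetCard.mp hs).2]

theorem D2_eq_zero_of_bipartite
    (n : ℕ) (hn : 2 ≤ n) (M : Matrix (Fin n) (Fin n) ℝ)
    (c : Fin n → Fin 2) (hc : ∀ i j, M i j ≠ 0 → c i ≠ c j) :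
    D2 n M = 0 := by
  refine det_eq_zero_of_column_eq_zero ⟨0, by omega⟩ fun i => ?_
  have hindex : 2 * ((i : ℕ) : ℤ) + 2 - (((0 : ℕ) : ℤ) + 1) = ((2 * i + 1 : ℕ) : ℤ) := by
    push_cast; ring
  rw [of_apply, Fin.val_mk, hindex]
  exact minorSum_eq_zero_of_bipartite_of_odd n M hc (odd_two_mul_add_one _)
end

section
/- Let λ_1, …, λ_5 be complex numbers and for 1 ≤ k ≤ 5 let J_k = e_k(λ_1,…,λ_5) be the k-th elementary symmetric polynomial in λ_1,…,λ_5. Then ∏_{1 ≤ i < j ≤ 5}(λ_i + λ_j) = −J_5² + 2J_1J_4J_5 + J_2J_3J_5 − J_1J_2²J_5 − J_1²J_4² − J_3²J_4 + J_1J_2J_3J_4. -/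
/-!
Writing the multiset of roots as `λ₀ ::ₘ ⋯ ::ₘ λ₄ ::ₘ 0`, the recursion
`e_{k+1}(a ::ₘ s) = a e_k(s) + e_{k+1}(s)` turns every `J_k` into an explicit polynomial in the
`λᵢ`, and the identity becomes one between polynomials of degree 10 in five variables, which
`ring` verifies.
-/

/-- The `k`-th elementary symmetric function of `lam : Fin 5 → ℂ`. -/
noncomputable def esym5 (lam : Fin 5 → ℂ) (k : ℕ) : ℂ :=
  ∑ s ∈ Finset.powersetCard k (Finset.univ : Finset (Fin 5)), ∏ i ∈ s, lam i

namespace Multiset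

variable {R : Type*} [CommSemiring R]

theorem esymm_zero_right (s : Multiset R) : s.esymm 0 = 1 := by
  simp [esymm, powersetCard_zero_left]

theorem esymm_zero_left (k : ℕ) : (0 : Multiset R).esymm (k + 1) = 0 := by
  simp [esymm, powersetCard_zero_right]

theorem esymm_cons_succ_s19 (a : R) (s : Multiset R) (k : ℕ) :
    (a ::ₘ s).esymm (k + 1) = a * s.esymm k + s.esymm (k + 1) := by
  simp [esymm, powersetCard_cons, map_map, sum_map_mul_left, add_comm]

end Multiset

theorem Fin.prod_prod_Iio_five {M : Type*} [CommMonoid M] (g : Fin 5 → Fin 5 → M) :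
    ∏ j : Fin 5, ∏ i ∈ Finset.Iio j, g i j =
      g 0 1 * (g 0 2 * g 1 2) * (g 0 3 * g 1 3 * g 2 3) * (g 0 4 * g 1 4 * g 2 4 * g 3 4) := by
  have h0 : Finset.Iio (0 : Fin 5) = ∅ := by decide
  have h1 : Finset.Iio (1 : Fin 5) = {0} := by decide
  have h2 : Finset.Iio (2 : Fin 5) = {0, 1} := by decide
  have h3 : Finset.Iio (3 : Fin 5) = {0, 1, 2} := by decide
  have h4 : Finset.Iio (4 : Fin 5) = {0, 1, 2, 3} := by decide
  simp [Fin.prod_univ_five, h0, h1, h2, h3, h4, mul_assoc]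

theorem q5_formula (lam : Fin 5 → ℂ) :
    (∏ j : Fin 5, ∏ i ∈ Finset.Iio j, (lam i + lam j)) =
      -(esym5 lam 5) ^ 2 + 2 * esym5 lam 1 * esym5 lam 4 * esym5 lam 5
        + esym5 lam 2 * esym5 lam 3 * esym5 lam 5
        - esym5 lam 1 * (esym5 lam 2) ^ 2 * esym5 lam 5
        - (esym5 lam 1) ^ 2 * (esym5 lam 4) ^ 2
        - (esym5 lam 3) ^ 2 * esym5 lam 4
        + esym5 lam 1 * esym5 lam 2 * esym5 lam 3 * esym5 lam 4 := by
  simp only [esym5, ← Finset.esymm_map_val, Fin.univ_val_map, List.ofFn_succ, List.ofFn_zero,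
    ← Multiset.cons_coe, Multiset.coe_nil, Multiset.esymm_cons_succ_s19, Multiset.esymm_zero_right,
    Multiset.esymm_zero_left, Fin.succ_zero_eq_one, Fin.succ_one_eq_two, Fin.reduceSucc]
  rw [Fin.prod_prod_Iio_five]
  ring
end
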